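/- Piecewise-trapezoid approximation of Hölder functions: Let psi : R → R be the trapezoid function psi(t) = 1 for |t| ≤ 1, psi(t) = 2 − |t| for 1 ≤ |t| ≤ 2, and psi(t) = 0 for |t| ≥ 2. Let N ≥ 2 and d ≥ 1 be integers, and for each multi-index n in {1,...,N}^d define phi_n(x) = prod_{i=1}^d psi( 3(N−1)( x^i − (n^i − 1)/(N−1) ) ) and the grid point x_n = ( (n^1 − 1)/(N−1), ..., (n^d − 1)/(N−1) ). Let 0 < beta ≤ 1, H_f > 0, and let f : [0,1]^d → R satisfy |f(x) − f(y)| ≤ H_f·||x − y||_2^beta for all x, y in [0,1]^d. Then sup_{x in [0,1]^d} | f(x) − sum_{n in {1,...,N}^d} f(x_n)·phi_n(x) | ≤ 2^d · d^beta · H_f · (N−1)^{−beta}. -/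

import Mathlib

open Finset Real

noncomputable section

/-- The trapezoid function: `ψ(t) = 1` for `|t| ≤ 1`, `ψ(t) = 2 - |t|` for
`1 ≤ |t| ≤ 2`, and `ψ(t) = 0` for `|t| ≥ 2`. -/
def trap (t : ℝ) : ℝ :=
  if |t| ≤ 1 then 1 else if |t| ≤ 2 then 2 - |t| else 0

/-- The trapezoid bump associated to the multi-index `n ∈ {1, …, N}^d`:
`φ_n(x) = ∏ i ψ(3(N-1)(xⁱ - (nⁱ-1)/(N-1)))`. -/
def trapBump (N d : ℕ) (n : Fin d → ℕ) (x : Fin d → ℝ) : ℝ :=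
  ∏ i : Fin d, trap (3 * ((N : ℝ) - 1) * (x i - ((n i : ℝ) - 1) / ((N : ℝ) - 1)))

/-- The grid point `x_n = ((n¹-1)/(N-1), …, (n^d-1)/(N-1))` of the multi-index `n`. -/
def gridPt (N d : ℕ) (n : Fin d → ℕ) : Fin d → ℝ :=
  fun i => ((n i : ℝ) - 1) / ((N : ℝ) - 1)

/-! The hats `ψ(3v)` telescope: `ψ(3v) = r v - r (v - 1)` for the ramp `r v = clamp (3v + 2) 0 1`,
so the shifted hats `ψ(3(u - m))`, `m = 0, …, N - 1`, sum to `r u - r (u - N) = 1` on `[0, N - 1]`,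
and the bumps `φ_n` form a partition of unity on `[0,1]^d`. Since `φ_n(x) ≠ 0` forces every
coordinate of `x - x_n` below `2 / (3(N - 1))`, the error `∑ (f x - f x_n) φ_n(x)` is a convex
combination of terms at most `H_f (d / (N - 1))^β`. -/

lemma one_le_natCast_sub_one {N : ℕ} (hN : 2 ≤ N) : (1 : ℝ) ≤ N - 1 := by
  have : (2 : ℝ) ≤ N := by exact_mod_cast hN
  linarith

def trapRamp (v : ℝ) : ℝ := max 0 (min 1 (3 * v + 2))

lemma trap_nonneg (t : ℝ) : 0 ≤ trap t := by
  unfold trap; split_ifs <;> linarith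

lemma trap_eq_zero_of_two_lt_abs {t : ℝ} (h : 2 < |t|) : trap t = 0 := by
  unfold trap; split_ifs <;> linarith

lemma trap_three_mul_eq_sub (v : ℝ) : trap (3 * v) = trapRamp v - trapRamp (v - 1) := by
  unfold trap trapRamp
  rcases le_total 0 v with hv | hv
  · rw [abs_of_nonneg (by linarith)]
    split_ifs <;> simp only [max_def, min_def] <;> split_ifs <;> linarith
  · rw [abs_of_nonpos (by linarith)]
    split_ifs <;> simp only [max_def, min_def] <;> split_ifs <;> linarith

lemma sum_Icc_sub_telescope (g : ℕ → ℝ) (N : ℕ) :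
    ∑ n ∈ Icc 1 N, (g (n - 1) - g n) = g 0 - g N := by
  induction N with
  | zero => simp
  | succ N ih => rw [sum_Icc_succ_top (by omega), ih]; simp

lemma sum_Icc_trap_eq_one {N : ℕ} {u : ℝ} (hu0 : 0 ≤ u) (huN : u ≤ N - 1) :
    ∑ n ∈ Icc 1 N, trap (3 * (u - ((n : ℝ) - 1))) = 1 := by
  have hterm : ∀ n ∈ Icc 1 N, trap (3 * (u - ((n : ℝ) - 1)))
      = trapRamp (u - ((n - 1 : ℕ) : ℝ)) - trapRamp (u - n) := fun n hn => by
    rw [trap_three_mul_eq_sub, Nat.cast_sub (mem_Icc.mp hn).1]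
    ring_nf
  rw [sum_congr rfl hterm, sum_Icc_sub_telescope (fun n => trapRamp (u - n))]
  have hramp_u : trapRamp u = 1 := by
    rw [trapRamp, min_eq_left (by linarith), max_eq_right zero_le_one]
  have hramp_uN : trapRamp (u - N) = 0 := by
    rw [trapRamp, min_eq_right (by linarith), max_eq_left (by linarith)]
  simp [hramp_u, hramp_uN]

lemma trapBump_nonneg (N d : ℕ) (n : Fin d → ℕ) (x : Fin d → ℝ) : 0 ≤ trapBump N d n x :=
  prod_nonneg fun _ _ => trap_nonneg _

lemma sum_trapBump_eq_one {N d : ℕ} (hN : 2 ≤ N) {x : Fin d → ℝ}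
    (hx : ∀ i, x i ∈ Set.Icc (0 : ℝ) 1) :
    ∑ n ∈ Fintype.piFinset (fun _ : Fin d => Icc 1 N), trapBump N d n x = 1 := by
  unfold trapBump
  rw [← prod_univ_sum (fun _ : Fin d => Icc 1 N)
    (fun i k => trap (3 * ((N : ℝ) - 1) * (x i - ((k : ℝ) - 1) / ((N : ℝ) - 1))))]
  refine prod_eq_one fun i _ => ?_
  have hN1 := one_le_natCast_sub_one hN
  have harg : ∀ k : ℕ, 3 * ((N : ℝ) - 1) * (x i - ((k : ℝ) - 1) / ((N : ℝ) - 1))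
      = 3 * ((N - 1) * x i - ((k : ℝ) - 1)) := fun k => by
    field_simp [(by linarith : (N : ℝ) - 1 ≠ 0)]
  obtain ⟨h0, h1⟩ := hx i
  simpa only [harg] using sum_Icc_trap_eq_one (N := N) (by positivity) (by nlinarith)

lemma abs_sub_gridPt_le_of_trapBump_ne_zero {N d : ℕ} (hN : 2 ≤ N) {n : Fin d → ℕ}
    {x : Fin d → ℝ} (h : trapBump N d n x ≠ 0) (i : Fin d) :
    |x i - gridPt N d n i| ≤ ((N : ℝ) - 1)⁻¹ := by
  have hN1 := one_le_natCast_sub_one hN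
  have htrap : |3 * ((N : ℝ) - 1) * (x i - gridPt N d n i)| ≤ 2 :=
    not_lt.mp fun hlt => h (prod_eq_zero (mem_univ i) (trap_eq_zero_of_two_lt_abs hlt))
  rw [abs_mul, abs_of_pos (by linarith)] at htrap
  rw [← one_div, le_div_iff₀ (by linarith)]
  nlinarith [abs_nonneg (x i - gridPt N d n i)]

lemma gridPt_mem_Icc {N d : ℕ} (hN : 2 ≤ N) {n : Fin d → ℕ}
    (hn : n ∈ Fintype.piFinset (fun _ : Fin d => Icc 1 N)) (i : Fin d) :
    gridPt N d n i ∈ Set.Icc (0 : ℝ) 1 := by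
  obtain ⟨h1, h2⟩ := mem_Icc.mp (Fintype.mem_piFinset.mp hn i)
  have h1 : (1 : ℝ) ≤ n i := by exact_mod_cast h1
  have h2 : (n i : ℝ) ≤ N := by exact_mod_cast h2
  have hN1 := one_le_natCast_sub_one hN
  exact ⟨div_nonneg (by linarith) (by linarith), (div_le_one (by linarith)).mpr (by linarith)⟩

lemma sqrt_sum_sq_le_card_mul {ι : Type*} [Fintype ι] {a : ι → ℝ} {c : ℝ}
    (h : ∀ i, |a i| ≤ c) : √(∑ i, a i ^ 2) ≤ Fintype.card ι * c :=
  calc √(∑ i, a i ^ 2) = √(∑ i, |a i| ^ 2) := by simp only [sq_abs]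
    _ ≤ √((∑ i, |a i|) ^ 2) := sqrt_le_sqrt (sum_sq_le_sq_sum_of_nonneg fun i _ => abs_nonneg _)
    _ = ∑ i, |a i| := sqrt_sq (sum_nonneg fun i _ => abs_nonneg _)
    _ ≤ ∑ _i : ι, c := sum_le_sum fun i _ => h i
    _ = Fintype.card ι * c := by rw [sum_const, card_univ, nsmul_eq_mul]

lemma abs_sub_sum_mul_le_of_sum_eq_one {ι : Type*} {s : Finset ι} {w b : ι → ℝ} {a B : ℝ}
    (hw : ∀ i ∈ s, 0 ≤ w i) (hsum : ∑ i ∈ s, w i = 1)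
    (hb : ∀ i ∈ s, w i ≠ 0 → |a - b i| ≤ B) :
    |a - ∑ i ∈ s, b i * w i| ≤ B := by
  have hterm : ∀ i ∈ s, |(a - b i) * w i| ≤ B * w i := fun i hi => by
    rw [abs_mul, abs_of_nonneg (hw i hi)]
    rcases eq_or_ne (w i) 0 with h0 | h0
    · simp [h0]
    · exact mul_le_mul_of_nonneg_right (hb i hi h0) (hw i hi)
  calc |a - ∑ i ∈ s, b i * w i| = |∑ i ∈ s, (a - b i) * w i| := by
        simp only [sub_mul, sum_sub_distrib, ← mul_sum, hsum, mul_one]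
    _ ≤ ∑ i ∈ s, |(a - b i) * w i| := abs_sum_le_sum_abs _ _
    _ ≤ ∑ i ∈ s, B * w i := sum_le_sum hterm
    _ = B := by rw [← mul_sum, hsum, mul_one]

theorem trapezoid_approximation_of_holder
    (N d : ℕ) (hN : 2 ≤ N) (β Hf : ℝ)
    (hβ0 : 0 < β) (hHf : 0 < Hf)
    (f : (Fin d → ℝ) → ℝ)
    (hf : ∀ x y : Fin d → ℝ, (∀ i, x i ∈ Set.Icc (0 : ℝ) 1) →
      (∀ i, y i ∈ Set.Icc (0 : ℝ) 1) →
      |f x - f y| ≤ Hf * Real.sqrt (∑ i, (x i - y i) ^ 2) ^ β) :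
    ∀ x : Fin d → ℝ, (∀ i, x i ∈ Set.Icc (0 : ℝ) 1) →
      |f x - ∑ n ∈ Fintype.piFinset (fun _ : Fin d => Finset.Icc 1 N),
          f (gridPt N d n) * trapBump N d n x| ≤
        2 ^ d * (d : ℝ) ^ β * Hf * ((N : ℝ) - 1) ^ (-β) := by
  intro x hx
  have hN1 : (0 : ℝ) ≤ N - 1 := zero_le_one.trans (one_le_natCast_sub_one hN)
  have hclose : ∀ n ∈ Fintype.piFinset (fun _ : Fin d => Icc 1 N), trapBump N d n x ≠ 0 →
      |f x - f (gridPt N d n)| ≤ Hf * (d * ((N : ℝ) - 1)⁻¹) ^ β := fun n hn hne =>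
    calc |f x - f (gridPt N d n)| ≤ Hf * √(∑ i, (x i - gridPt N d n i) ^ 2) ^ β :=
          hf x _ hx (gridPt_mem_Icc hN hn)
      _ ≤ Hf * (d * ((N : ℝ) - 1)⁻¹) ^ β := by
          gcongr
          simpa using sqrt_sum_sq_le_card_mul (abs_sub_gridPt_le_of_trapBump_ne_zero hN hne)
  have h2d : (1 : ℝ) ≤ 2 ^ d := one_le_pow₀ (by norm_num)
  calc _ ≤ Hf * (d * ((N : ℝ) - 1)⁻¹) ^ β := abs_sub_sum_mul_le_of_sum_eq_one
          (fun n _ => trapBump_nonneg N d n x) (sum_trapBump_eq_one hN hx) hclose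
    _ = 1 * (d : ℝ) ^ β * Hf * ((N : ℝ) - 1) ^ (-β) := by
        rw [mul_rpow (by positivity) (by positivity), inv_rpow hN1, ← rpow_neg hN1]
        ring
    _ ≤ 2 ^ d * (d : ℝ) ^ β * Hf * ((N : ℝ) - 1) ^ (-β) := by gcongr

end
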